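/- Let p > 3 be a prime and let D ∈ ℚ_p* have odd p-adic valuation, so that K = ℚ_p[t]/(t² − D) is a ramified quadratic field extension of ℚ_p. If δ ∈ K* is such that N_{K/ℚ_p}(δ) is a cube in ℚ_p*, then δ is a cube in K*. Equivalently, the kernel of the map K*/(K*)³ → ℚ_p*/(ℚ_p*)³ induced by the norm is trivial. -/

import Mathlib

/-!
Dividing `δ²` by `c³`, where `c³ = N(δ)`, gives a unit `u = s + t√D` of norm one, and it
suffices to extract a cube root of `u`, because `δ = (δ²)² / δ³`. Since `v(D)` is odd, the two
terms of `s² - Dt² = 1` cannot have equal absolute value, which forces `|Dt²| < 1`, i.e.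
`s² ≡ 1 mod p`. Writing the cube root as `e + f√D`, the triple-angle formula reduces the problem to
the cubic `4e³ - 3e = s`: at `e = s` its derivative `12s² - 3 ≡ 9` is a unit when `p ≠ 3`, so
Hensel's lemma produces `e`, and then `f = t / (4e² - 1)`.
-/

open Polynomial

theorem exists_pow_three_eq_of_sq_eq_pow_three {G : Type*} [CommGroup G] {a b : G}
    (h : a ^ 2 = b ^ 3) : ∃ c : G, c ^ 3 = a :=
  ⟨b ^ 2 * a⁻¹, by rw [mul_pow, ← pow_mul, show 2 * 3 = 3 * 2 from rfl, pow_mul, ← h]; group⟩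

/-- The coordinates of `(e + f√D)³ = s + t√D` on the conic `s² - Dt² = 1`. -/
theorem exists_cube_coords_of_four_mul_pow_three_sub_three_mul_eq {F : Type*} [Field F]
    {D s t e : F} (hst : s ^ 2 - D * t ^ 2 = 1) (he : 4 * e ^ 3 - 3 * e = s)
    (he' : 4 * e ^ 2 - 1 ≠ 0) :
    ∃ f : F, e ^ 3 + 3 * D * e * f ^ 2 = s ∧ 3 * e ^ 2 * f + D * f ^ 3 = t := by
  set f := t / (4 * e ^ 2 - 1)
  have hf : f * (4 * e ^ 2 - 1) = t := div_mul_cancel₀ t he'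
  have hDf : D * f ^ 2 = e ^ 2 - 1 := by
    apply mul_right_cancel₀ (pow_ne_zero 2 he')
    linear_combination D * (f * (4 * e ^ 2 - 1) + t) * hf - hst - (4 * e ^ 3 - 3 * e + s) * he
  exact ⟨f, by linear_combination 3 * e * hDf + he, by linear_combination f * hDf + hf⟩

namespace AdjoinRoot

variable {R : Type*} [CommRing R] (D : R)

theorem root_X_pow_two_sub_C_sq : root (X ^ 2 - C D) ^ 2 = algebraMap R _ D := by
  have h := mk_self (f := X ^ 2 - C D)
  rwa [map_sub, map_pow, mk_X, mk_C, sub_eq_zero] at h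

theorem algebraMap_add_mul_root_pow_three (a b : R) :
    (algebraMap R _ a + algebraMap R _ b * root (X ^ 2 - C D)) ^ 3 =
      algebraMap R _ (a ^ 3 + 3 * D * a * b ^ 2) +
        algebraMap R _ (3 * a ^ 2 * b + D * b ^ 3) * root (X ^ 2 - C D) := by
  simp only [map_add, map_mul, map_pow, map_ofNat]
  linear_combination (3 * algebraMap R _ a * algebraMap R _ b ^ 2 +
    algebraMap R _ b ^ 3 * root (X ^ 2 - C D)) * root_X_pow_two_sub_C_sq D

variable [Nontrivial R]

noncomputable def basisOneRoot : Module.Basis (Fin 2) R (AdjoinRoot (X ^ 2 - C D)) :=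
  (powerBasis' (monic_X_pow_sub_C D two_ne_zero)).basis.reindex (finCongr natDegree_X_pow_sub_C)

theorem basisOneRoot_apply (i : Fin 2) : basisOneRoot D i = root (X ^ 2 - C D) ^ (i : ℕ) := by
  rw [basisOneRoot, Module.Basis.reindex_apply, PowerBasis.basis_eq_pow]
  rfl

theorem basisOneRoot_equivFun_symm (a b : R) :
    (basisOneRoot D).equivFun.symm ![a, b] =
      algebraMap R _ a + algebraMap R _ b * root (X ^ 2 - C D) := by
  simp [Module.Basis.equivFun_symm_apply, Fin.sum_univ_two, basisOneRoot_apply, Algebra.smul_def]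

theorem basisOneRoot_repr (a b : R) (i : Fin 2) :
    (basisOneRoot D).repr (algebraMap R _ a + algebraMap R _ b * root (X ^ 2 - C D)) i =
      ![a, b] i := by
  rw [← basisOneRoot_equivFun_symm, ← Module.Basis.equivFun_apply, LinearEquiv.apply_symm_apply]

theorem exists_eq_algebraMap_add_mul_root (x : AdjoinRoot (X ^ 2 - C D)) :
    ∃ a b : R, x = algebraMap R _ a + algebraMap R _ b * root (X ^ 2 - C D) := by
  set v := (basisOneRoot D).equivFun x
  refine ⟨v 0, v 1, ?_⟩
  rw [← basisOneRoot_equivFun_symm, show ![v 0, v 1] = v by ext i; fin_cases i <;> rfl]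
  exact ((basisOneRoot D).equivFun.symm_apply_apply x).symm

theorem leftMulMatrix_basisOneRoot (a b : R) :
    Algebra.leftMulMatrix (basisOneRoot D)
        (algebraMap R _ a + algebraMap R _ b * root (X ^ 2 - C D)) = !![a, D * b; b, a] := by
  have h_mul_root : (algebraMap R _ a + algebraMap R _ b * root (X ^ 2 - C D)) *
      root (X ^ 2 - C D) = algebraMap R _ (D * b) + algebraMap R _ a * root (X ^ 2 - C D) := by
    rw [map_mul]
    linear_combination algebraMap R _ b * root_X_pow_two_sub_C_sq D
  ext i j
  rw [Algebra.leftMulMatrix_eq_repr_mul, basisOneRoot_apply]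
  fin_cases j
  · rw [Fin.zero_eta, Fin.val_zero, pow_zero, mul_one, basisOneRoot_repr]
    fin_cases i <;> rfl
  · rw [Fin.mk_one, Fin.val_one, pow_one, h_mul_root, basisOneRoot_repr]
    fin_cases i <;> rfl

theorem norm_algebraMap_add_mul_root (a b : R) :
    Algebra.norm R (algebraMap R _ a + algebraMap R _ b * root (X ^ 2 - C D)) =
      a ^ 2 - D * b ^ 2 := by
  rw [Algebra.norm_eq_matrix_det (basisOneRoot D), leftMulMatrix_basisOneRoot,
    Matrix.det_fin_two_of]
  ring

end AdjoinRoot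

namespace PadicInt

variable {p : ℕ} [Fact p.Prime]

theorem exists_four_mul_pow_three_sub_three_mul_eq (hp : p ≠ 3) {s : ℤ_[p]}
    (hs : ‖s ^ 2 - 1‖ < 1) : ∃ e : ℤ_[p], 4 * e ^ 3 - 3 * e = s ∧ IsUnit (4 * e ^ 2 - 1) := by
  set F : ℤ_[p][X] := C 4 * X ^ 3 - C 3 * X - C s
  have hF_eval (x : ℤ_[p]) : F.aeval x = 4 * x ^ 3 - 3 * x - s := by simp [F]
  have hF'_eval (x : ℤ_[p]) : F.derivative.aeval x = 3 * (4 * x ^ 2 - 1) := by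
    norm_num [F, mul_sub, mul_left_comm (3 : ℤ_[p])]
  have h_three : ‖(3 : ℤ_[p])‖ = 1 := by
    simpa using norm_natCast_eq_one_iff.mpr ((Nat.coprime_primes Fact.out Nat.prime_three).mpr hp)
  have h_small : ‖(4 : ℤ_[p]) * (s ^ 2 - 1)‖ < 1 := by
    rw [norm_mul]
    exact (mul_le_of_le_one_left (norm_nonneg _) (norm_le_one 4)).trans_lt hs
  have hF'_s : ‖F.derivative.aeval s‖ = 1 := by
    rw [hF'_eval, norm_mul, h_three, one_mul, show 4 * s ^ 2 - 1 = 3 + 4 * (s ^ 2 - 1) by ring,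
      IsUltrametricDist.norm_add_eq_max_of_norm_ne_norm (h_three ▸ h_small.ne'), h_three,
      max_eq_left h_small.le]
  have hF_s : ‖F.aeval s‖ < ‖F.derivative.aeval s‖ ^ 2 := by
    rw [hF'_s, one_pow, hF_eval, show 4 * s ^ 3 - 3 * s - s = s * (4 * (s ^ 2 - 1)) by ring,
      norm_mul]
    exact (mul_le_of_le_one_left (norm_nonneg _) (norm_le_one s)).trans_lt h_small
  obtain ⟨e, he, -, he', -⟩ := hensels_lemma hF_s
  rw [hF_eval, sub_eq_zero] at he
  rw [hF'_s, hF'_eval, norm_mul, h_three, one_mul] at he'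
  exact ⟨e, he, isUnit_iff.mpr he'⟩

end PadicInt

namespace Padic

variable {p : ℕ} [Fact p.Prime]

theorem exists_four_mul_pow_three_sub_three_mul_eq (hp : p ≠ 3) {s : ℚ_[p]}
    (hs : ‖s ^ 2 - 1‖ < 1) : ∃ e : ℚ_[p], 4 * e ^ 3 - 3 * e = s ∧ 4 * e ^ 2 - 1 ≠ 0 := by
  have hs_le : ‖s‖ ≤ 1 := by
    refine (pow_le_one_iff_of_nonneg (norm_nonneg s) two_ne_zero).mp ?_
    rw [← norm_pow, ← sub_add_cancel (s ^ 2) 1]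
    exact (IsUltrametricDist.norm_add_le_max _ _).trans (max_le hs.le norm_one.le)
  obtain ⟨s, rfl⟩ : ∃ s' : ℤ_[p], (s' : ℚ_[p]) = s := ⟨⟨s, hs_le⟩, rfl⟩
  obtain ⟨e, he, he_unit⟩ :=
    PadicInt.exists_four_mul_pow_three_sub_three_mul_eq hp (s := s) (by exact_mod_cast hs)
  -- `norm_cast` cannot move numerals out of `ℤ_[p]`, but `map_ofNat` can.
  have h_ne : PadicInt.Coe.ringHom (4 * e ^ 2 - 1) ≠ 0 := PadicInt.coe_ne_zero.mpr he_unit.ne_zero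
  replace he := congrArg PadicInt.Coe.ringHom he
  simp only [map_sub, map_mul, map_pow, map_ofNat, map_one] at he h_ne
  exact ⟨e, he, h_ne⟩

theorem norm_sq_ne_norm_mul_sq {D t : ℚ_[p]} (hD : Odd D.valuation) (ht : t ≠ 0) (s : ℚ_[p]) :
    ‖s ^ 2‖ ≠ ‖D * t ^ 2‖ := by
  have hD0 : D ≠ 0 := by rintro rfl; simp at hD
  have hDt : D * t ^ 2 ≠ 0 := by positivity
  rcases eq_or_ne s 0 with rfl | hs
  · simpa [eq_comm] using hDt
  have hp : (1 : ℝ) < p := mod_cast (Fact.out : p.Prime).one_lt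
  rw [norm_eq_zpow_neg_valuation (pow_ne_zero 2 hs), norm_eq_zpow_neg_valuation hDt,
    Ne, zpow_right_inj₀ (by positivity) hp.ne', neg_inj, valuation_mul hD0 (pow_ne_zero 2 ht),
    valuation_pow, valuation_pow]
  obtain ⟨k, hk⟩ := hD
  omega

theorem norm_mul_sq_lt_one_of_sq_sub_mul_sq_eq_one {D s t : ℚ_[p]} (hD : Odd D.valuation)
    (h : s ^ 2 - D * t ^ 2 = 1) : ‖D * t ^ 2‖ < 1 := by
  rcases eq_or_ne t 0 with rfl | ht
  · simp
  have h_max : max ‖s ^ 2‖ ‖D * t ^ 2‖ = 1 := by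
    rw [← norm_neg (D * t ^ 2), ← IsUltrametricDist.norm_add_eq_max_of_norm_ne_norm,
      ← sub_eq_add_neg, h, norm_one]
    simpa using norm_sq_ne_norm_mul_sq hD ht s
  have h_ne : ‖D * t ^ 2‖ ≠ 1 := by
    simpa [eq_comm] using norm_sq_ne_norm_mul_sq hD ht 1
  exact lt_of_le_of_ne (h_max ▸ le_max_right _ _) h_ne

end Padic

theorem AdjoinRoot.exists_pow_three_eq_of_norm_eq_one {p : ℕ} [Fact p.Prime] (hp : p ≠ 3)
    {D : ℚ_[p]} (hD : Odd D.valuation) (u : (AdjoinRoot (X ^ 2 - C D))ˣ)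
    (hu : Algebra.norm ℚ_[p] (u : AdjoinRoot (X ^ 2 - C D)) = 1) :
    ∃ y : (AdjoinRoot (X ^ 2 - C D))ˣ, y ^ 3 = u := by
  obtain ⟨s, t, hst⟩ := exists_eq_algebraMap_add_mul_root D (u : AdjoinRoot (X ^ 2 - C D))
  have h_norm : s ^ 2 - D * t ^ 2 = 1 := by rw [← norm_algebraMap_add_mul_root, ← hst, hu]
  have hs : ‖s ^ 2 - 1‖ < 1 := by
    rw [show s ^ 2 - 1 = D * t ^ 2 by linear_combination h_norm]
    exact Padic.norm_mul_sq_lt_one_of_sq_sub_mul_sq_eq_one hD h_norm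
  obtain ⟨e, he, he'⟩ := Padic.exists_four_mul_pow_three_sub_three_mul_eq hp hs
  obtain ⟨f, hs, ht⟩ := exists_cube_coords_of_four_mul_pow_three_sub_three_mul_eq h_norm he he'
  have hy : (algebraMap ℚ_[p] _ e + algebraMap ℚ_[p] _ f * root (X ^ 2 - C D)) ^ 3 =
      (u : AdjoinRoot (X ^ 2 - C D)) := by
    rw [algebraMap_add_mul_root_pow_three, hs, ht, hst]
  have hy_unit := (isUnit_pow_iff three_ne_zero).mp (hy ▸ u.isUnit)
  exact ⟨hy_unit.unit, Units.ext hy⟩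

open Polynomial in
theorem cube_of_norm_cube_ramified_general (p : ℕ) [Fact p.Prime] (hp : 3 < p)
    (D : ℚ_[p]) (hodd : Odd D.valuation) :
    ∀ δ : (AdjoinRoot (X ^ 2 - C D))ˣ,
      (∃ c : ℚ_[p]ˣ, (c : ℚ_[p]) ^ 3
          = Algebra.norm ℚ_[p] (δ : AdjoinRoot (X ^ 2 - C D))) →
      ∃ κ : (AdjoinRoot (X ^ 2 - C D))ˣ, κ ^ 3 = δ := by
  rintro δ ⟨c, hc⟩
  let c' : (AdjoinRoot (X ^ 2 - C D))ˣ :=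
    Units.map (algebraMap ℚ_[p] (AdjoinRoot (X ^ 2 - C D))).toMonoidHom c
  have h_norm_c' : Algebra.norm ℚ_[p] (c' : AdjoinRoot (X ^ 2 - C D)) = c ^ 2 := by
    simpa [c'] using AdjoinRoot.norm_algebraMap_add_mul_root D c 0
  obtain ⟨y, hy⟩ :=
    AdjoinRoot.exists_pow_three_eq_of_norm_eq_one hp.ne' hodd (δ ^ 2 * c'⁻¹ ^ 3) (by
      simp only [Units.val_mul, Units.val_pow_eq_pow_val, map_mul, map_pow, map_units_inv,
        h_norm_c', ← hc]
      field_simp)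
  exact exists_pow_three_eq_of_sq_eq_pow_three (b := c' * y)
    (by rw [mul_pow, hy, inv_pow, mul_inv_cancel_comm_assoc])

open Polynomial in
/-- Let `p > 3` be a prime and `D ∈ ℚ_p*` of odd valuation, so that
`K = ℚ_p[t]/(t² − D)` is a ramified quadratic extension. If the norm of `δ ∈ K*` is a cube in
`ℚ_p*`, then `δ` is a cube in `K*`. -/
theorem cube_of_norm_cube_ramified (p : ℕ) [Fact p.Prime] (hp : 3 < p)
    (D : ℚ_[p]) (hD : D ≠ 0) (hodd : Odd D.valuation) :
    ∀ δ : (AdjoinRoot (X ^ 2 - C D))ˣ,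
      (∃ c : ℚ_[p]ˣ, (c : ℚ_[p]) ^ 3
          = Algebra.norm ℚ_[p] (δ : AdjoinRoot (X ^ 2 - C D))) →
      ∃ κ : (AdjoinRoot (X ^ 2 - C D))ˣ, κ ^ 3 = δ :=
  cube_of_norm_cube_ramified_general p hp D hodd
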